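/- arXiv:1903.06125 — 2 statements merged into one kernel-verified Lean document; each statement's English description precedes it below -/
import Mathlib

section
/- Let H₁, H₂ be Hilbert spaces, T ∈ B(H₁, H₂), and M ∈ B(H₁) a self-adjoint coercive operator, i.e. |⟨φ, Mφ⟩| ≥ c‖φ‖² for some c > 0 and all φ. Set F = T M T*. Then for g ∈ H₂ with g ≠ 0: g ∈ ran(T) if and only if inf{ |⟨u, F u⟩| : u ∈ H₂, ⟨u, g⟩ = 1 } > 0. -/
/-!
Since `⟪u, F u⟫ = ⟪T* u, M T* u⟫` and `φ ↦ |⟪φ, M φ⟫|` is continuous, vanishes at `0` and is at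
least `c ‖φ‖²`, the infimum is positive iff `0` is not in the closure of `T* {u | ⟪u, g⟫ = 1}`.
If `g = T φ`, then `1 = ⟪T* u, φ⟫ ≤ ‖T* u‖ ‖φ‖` on that hyperplane. Conversely, if `0` is not in that
closure, neither is `T* u₀` in the closure of `T* (gᗮ)`, so some `ψ ⊥ T* (gᗮ)` has
`⟪ψ, T* u₀⟫ ≠ 0`; then `T ψ ⊥ gᗮ`, so `T ψ` is a nonzero multiple of `g`.
-/

open scoped InnerProductSpace

section

variable {𝕜 E F : Type*} [RCLike 𝕜]
  [NormedAddCommGroup E] [InnerProductSpace 𝕜 E]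
  [NormedAddCommGroup F] [InnerProductSpace 𝕜 F]

theorem exists_inner_eq_one {g : F} (hg : g ≠ 0) : ∃ u : F, ⟪u, g⟫_𝕜 = 1 :=
  ⟨(starRingEnd 𝕜 ⟪g, g⟫_𝕜)⁻¹ • g, by simp [inner_smul_left, hg]⟩

variable [CompleteSpace E] [CompleteSpace F]

namespace ContinuousLinearMap

theorem inner_comp_comp_adjoint_apply (T : E →L[𝕜] F) (M : E →L[𝕜] E) (u : F) :
    ⟪u, (T.comp M).comp (adjoint T) u⟫_𝕜 = ⟪adjoint T u, M (adjoint T u)⟫_𝕜 :=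
  (adjoint_inner_left T _ u).symm

theorem one_le_norm_adjoint_apply_mul_norm (T : E →L[𝕜] F) {u : F} {φ : E}
    (h : ⟪u, T φ⟫_𝕜 = 1) : 1 ≤ ‖adjoint T u‖ * ‖φ‖ := by
  simpa [adjoint_inner_left, h] using norm_inner_le_norm (𝕜 := 𝕜) (adjoint T u) φ

theorem exists_apply_eq_of_adjoint_notMem_closure_map_orthogonal (T : E →L[𝕜] F) {g u : F}
    (hu : ⟪u, g⟫_𝕜 = 1)
    (h : adjoint T u ∉ ((𝕜 ∙ g)ᗮ.map (adjoint T : F →ₗ[𝕜] E)).topologicalClosure) :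
    ∃ φ : E, T φ = g := by
  rw [← Submodule.orthogonal_orthogonal_eq_closure, Submodule.mem_orthogonal] at h
  push Not at h
  obtain ⟨ψ, hψ, hψ_ne⟩ := h
  have hTψ : T ψ ∈ 𝕜 ∙ g := by
    rw [← (𝕜 ∙ g).orthogonal_orthogonal, Submodule.mem_orthogonal]
    intro v hv
    rw [← adjoint_inner_left]
    exact (Submodule.mem_orthogonal _ _).mp hψ _ (Submodule.mem_map_of_mem hv)
  obtain ⟨a, ha⟩ := Submodule.mem_span_singleton.mp hTψ
  have hψ_eq : ⟪ψ, adjoint T u⟫_𝕜 = starRingEnd 𝕜 a := by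
    rw [adjoint_inner_right, ← ha, inner_smul_left, ← inner_conj_symm, hu, map_one, mul_one]
  have ha0 : a ≠ 0 := by rintro rfl; simp [hψ_eq] at hψ_ne
  exact ⟨a⁻¹ • ψ, by rw [map_smul, ← ha, smul_smul, inv_mul_cancel₀ ha0, one_smul]⟩

theorem exists_apply_eq_of_zero_notMem_closure_image_adjoint (T : E →L[𝕜] F) {g : F}
    (h : (0 : E) ∉ closure (adjoint T '' {u | ⟪u, g⟫_𝕜 = 1})) : ∃ φ : E, T φ = g := by
  rcases eq_or_ne g 0 with rfl | hg
  · exact ⟨0, map_zero T⟩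
  obtain ⟨u, hu⟩ := exists_inner_eq_one (𝕜 := 𝕜) hg
  refine T.exists_apply_eq_of_adjoint_notMem_closure_map_orthogonal hu fun hmem => h ?_
  rw [← SetLike.mem_coe, Submodule.topologicalClosure_coe, Metric.mem_closure_iff] at hmem
  refine Metric.mem_closure_iff.mpr fun ε hε => ?_
  obtain ⟨_, ⟨v, hv, rfl⟩, hdist⟩ := hmem ε hε
  refine ⟨adjoint T (u - v), ⟨u - v, ?_, rfl⟩, ?_⟩
  · rw [Set.mem_ofPred_eq, inner_sub_left, hu, inner_eq_zero_symm.mp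
      (Submodule.mem_orthogonal_singleton_iff_inner_right.mp hv), sub_zero]
  · rwa [map_sub, dist_zero_left, ← dist_eq_norm]

end ContinuousLinearMap

end

theorem stmt11_general {H1 H2 : Type*}
    [NormedAddCommGroup H1] [InnerProductSpace ℂ H1] [CompleteSpace H1]
    [NormedAddCommGroup H2] [InnerProductSpace ℂ H2] [CompleteSpace H2]
    (T : H1 →L[ℂ] H2) (M : H1 →L[ℂ] H1)
    (c : ℝ) (hc : 0 < c)
    (hcoerc : ∀ φ : H1, c * ‖φ‖ ^ 2 ≤ ‖(inner ℂ φ (M φ) : ℂ)‖)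
    (F : H2 →L[ℂ] H2) (hF : F = (T.comp M).comp (ContinuousLinearMap.adjoint T))
    (g : H2) (hg : g ≠ 0) :
    (∃ φ : H1, T φ = g) ↔
      0 < sInf {r : ℝ | ∃ u : H2, (inner ℂ u g : ℂ) = 1 ∧ r = ‖(inner ℂ u (F u) : ℂ)‖} := by
  set A := ContinuousLinearMap.adjoint T
  set S := {r : ℝ | ∃ u : H2, (inner ℂ u g : ℂ) = 1 ∧ r = ‖(inner ℂ u (F u) : ℂ)‖}
  have hFu (u : H2) : ⟪u, F u⟫_ℂ = ⟪A u, M (A u)⟫_ℂ :=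
    hF ▸ T.inner_comp_comp_adjoint_apply M u
  have hS : S = (fun ψ => ‖⟪ψ, M ψ⟫_ℂ‖) '' (A '' {u | ⟪u, g⟫_ℂ = 1}) := by
    ext r
    simp [S, hFu, eq_comm]
  obtain ⟨u₀, hu₀⟩ := exists_inner_eq_one (𝕜 := ℂ) hg
  have hSne : S.Nonempty := ⟨_, u₀, hu₀, rfl⟩
  constructor
  · rintro ⟨φ, rfl⟩
    have hφ : 0 < ‖φ‖ := norm_pos_iff.mpr (by rintro rfl; exact hg (map_zero T))
    refine lt_of_lt_of_le (by positivity : 0 < c / ‖φ‖ ^ 2) (le_csInf hSne ?_)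
    rintro r ⟨u, hu, rfl⟩
    calc c / ‖φ‖ ^ 2 ≤ c * ‖A u‖ ^ 2 := by
          rw [div_le_iff₀ (by positivity), mul_assoc, ← mul_pow]
          exact le_mul_of_one_le_right hc.le
            (one_le_pow₀ (T.one_le_norm_adjoint_apply_mul_norm hu))
      _ ≤ ‖⟪u, F u⟫_ℂ‖ := by rw [hFu]; exact hcoerc _
  · intro hpos
    refine T.exists_apply_eq_of_zero_notMem_closure_image_adjoint fun h0 => hpos.ne' ?_
    have hS0 : (0 : ℝ) ∈ closure S := by
      rw [hS]
      simpa using map_mem_closure (f := fun ψ => ‖⟪ψ, M ψ⟫_ℂ‖) (by fun_prop) h0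
        (Set.mapsTo_image _ _)
    exact (isGLB_of_mem_closure (by rintro r ⟨u, -, rfl⟩; exact norm_nonneg _) hS0).csInf_eq hSne

/-- the inf-criterion of the factorization method: for F = T M T*
with M self-adjoint and coercive, a nonzero g is in ran(T) iff
inf{ |⟨u, F u⟩| : ⟨u, g⟩ = 1 } > 0. -/
theorem stmt11 {H1 H2 : Type*}
    [NormedAddCommGroup H1] [InnerProductSpace ℂ H1] [CompleteSpace H1]
    [NormedAddCommGroup H2] [InnerProductSpace ℂ H2] [CompleteSpace H2]
    (T : H1 →L[ℂ] H2) (M : H1 →L[ℂ] H1) (hMsa : IsSelfAdjoint M)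
    (c : ℝ) (hc : 0 < c)
    (hcoerc : ∀ φ : H1, c * ‖φ‖ ^ 2 ≤ ‖(inner ℂ φ (M φ) : ℂ)‖)
    (F : H2 →L[ℂ] H2) (hF : F = (T.comp M).comp (ContinuousLinearMap.adjoint T))
    (g : H2) (hg : g ≠ 0) :
    (∃ φ : H1, T φ = g) ↔
      0 < sInf {r : ℝ | ∃ u : H2, (inner ℂ u g : ℂ) = 1 ∧ r = ‖(inner ℂ u (F u) : ℂ)‖} :=
  stmt11_general T M c hc hcoerc F hF g hg
end

section
/- Let H₁, H₂ be Hilbert spaces, T ∈ B(H₁, H₂), and M ∈ B(H₁) self-adjoint with M ≥ c > 0. Then ran(T M T*)^{1/2} = ran(T), where (T M T*)^{1/2} is the positive square root of the nonnegative operator T M T*. -/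
/-!
Since `S` is self-adjoint with `S ∘ S = T M T*`, we have `‖S x‖² = Re ⟪M T* x, T* x⟫`, and the
bounds `c ≤ M ≤ ‖M‖` make `‖S x‖` and `‖T* x‖` equivalent norms. By Douglas' lemma — if
`‖A* x‖ ≤ C ‖B* x‖` for all `x` then `ran A ⊆ ran B` — the ranges of `S = S*` and `T` coincide.
-/

open ContinuousLinearMap
open scoped InnerProduct InnerProductSpace

section

variable {𝕜 E F G : Type*} [RCLike 𝕜]
  [NormedAddCommGroup E] [InnerProductSpace 𝕜 E] [CompleteSpace E]
  [NormedAddCommGroup F] [InnerProductSpace 𝕜 F] [CompleteSpace F]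
  [NormedAddCommGroup G] [InnerProductSpace 𝕜 G] [CompleteSpace G]

/-- The functional `A† x ↦ ⟪y, x⟫` on `range A†` is well defined and bounded; its Hahn–Banach
extension is represented by a preimage of `y`. -/
theorem mem_range_of_norm_inner_le (A : E →L[𝕜] F) (y : F) (C : ℝ)
    (h : ∀ x, ‖⟪y, x⟫_𝕜‖ ≤ C * ‖(A†) x‖) : y ∈ Set.range A := by
  set B : F →ₗ[𝕜] E := (A†).toLinearMap
  set ℓ : F →ₗ[𝕜] 𝕜 := (innerSL 𝕜 y).toLinearMap
  have hker : LinearMap.ker B ≤ LinearMap.ker ℓ := fun x hx => by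
    have := h x
    rw [show (A†) x = 0 from hx, norm_zero, mul_zero, norm_le_zero_iff] at this
    exact this
  set f₀ : LinearMap.range B →ₗ[𝕜] 𝕜 :=
    (LinearMap.ker B).liftQ ℓ hker ∘ₗ (B.quotKerEquivRange.symm : LinearMap.range B →ₗ[𝕜] _)
  have hf₀ : ∀ x, f₀ ⟨B x, LinearMap.mem_range_self B x⟩ = ⟪y, x⟫_𝕜 := fun x => by
    simp [f₀, ℓ, B.quotKerEquivRange_symm_apply_image]
  have hbound : ∀ v : LinearMap.range B, ‖f₀ v‖ ≤ C * ‖v‖ := by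
    rintro ⟨_, x, rfl⟩
    rw [hf₀ x]
    exact h x
  obtain ⟨g, hg, -⟩ := exists_extension_norm_eq _ (f₀.mkContinuous C hbound)
  refine ⟨(InnerProductSpace.toDual 𝕜 E).symm g, ext_inner_right 𝕜 fun x => ?_⟩
  rw [← adjoint_inner_right, InnerProductSpace.toDual_symm_apply]
  exact (hg ⟨B x, LinearMap.mem_range_self B x⟩).trans (hf₀ x)

theorem range_subset_range_of_norm_adjoint_le (A : E →L[𝕜] G) (B : F →L[𝕜] G) (C : ℝ)
    (h : ∀ x, ‖(A†) x‖ ≤ C * ‖(B†) x‖) : Set.range A ⊆ Set.range B := by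
  rintro _ ⟨w, rfl⟩
  refine mem_range_of_norm_inner_le B (A w) (‖w‖ * C) fun x => ?_
  calc ‖⟪A w, x⟫_𝕜‖ = ‖⟪w, (A†) x⟫_𝕜‖ := by rw [adjoint_inner_right]
    _ ≤ ‖w‖ * ‖(A†) x‖ := norm_inner_le_norm _ _
    _ ≤ ‖w‖ * (C * ‖(B†) x‖) := mul_le_mul_of_nonneg_left (h x) (norm_nonneg w)
    _ = ‖w‖ * C * ‖(B†) x‖ := by ring

theorem norm_sq_apply_eq_re_inner_of_comp_self_eq {S : G →L[𝕜] G} (hS : IsSelfAdjoint S)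
    {T : E →L[𝕜] G} {M : E →L[𝕜] E} (hS2 : S ∘L S = T ∘L M ∘L T†) (x : G) :
    ‖S x‖ ^ 2 = RCLike.re ⟪M ((T†) x), (T†) x⟫_𝕜 := by
  rw [apply_norm_sq_eq_inner_adjoint_left, hS.adjoint_eq, hS2, comp_apply, comp_apply,
    adjoint_inner_right]

end

theorem le_sqrt_mul_of_sq_le_mul_sq {a b C : ℝ} (hC : 0 ≤ C) (hb : 0 ≤ b)
    (h : a ^ 2 ≤ C * b ^ 2) : a ≤ √C * b := by
  rw [← Real.sqrt_sq hb, ← Real.sqrt_mul hC]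
  exact Real.le_sqrt_of_sq_le h

theorem stmt12_general {H1 H2 : Type*}
    [NormedAddCommGroup H1] [InnerProductSpace ℂ H1] [CompleteSpace H1]
    [NormedAddCommGroup H2] [InnerProductSpace ℂ H2] [CompleteSpace H2]
    (T : H1 →L[ℂ] H2) (M : H1 →L[ℂ] H1)
    (c : ℝ) (hc : 0 < c)
    (hM : ∀ φ : H1, c * ‖φ‖ ^ 2 ≤ (inner ℂ (M φ) φ : ℂ).re)
    (F : H2 →L[ℂ] H2) (hF : F = (T.comp M).comp (ContinuousLinearMap.adjoint T))
    -- S is the positive square root of the nonnegative operator F = T M T*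
    (S : H2 →L[ℂ] H2) (hS : S.IsPositive) (hS2 : S.comp S = F) :
    Set.range (⇑S) = Set.range (⇑T) := by
  have hSsa := hS.isSelfAdjoint
  have hnorm := norm_sq_apply_eq_re_inner_of_comp_self_eq hSsa (hS2.trans hF)
  refine subset_antisymm (range_subset_range_of_norm_adjoint_le S T √‖M‖ fun x => ?_)
    (range_subset_range_of_norm_adjoint_le T S √c⁻¹ fun x => ?_)
  · rw [hSsa.adjoint_eq]
    set u := adjoint T x
    refine le_sqrt_mul_of_sq_le_mul_sq (norm_nonneg M) (norm_nonneg u) ?_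
    calc ‖S x‖ ^ 2 ≤ ‖M u‖ * ‖u‖ := hnorm x ▸ re_inner_le_norm _ _
      _ ≤ ‖M‖ * ‖u‖ * ‖u‖ := mul_le_mul_of_nonneg_right (M.le_opNorm u) (norm_nonneg u)
      _ = ‖M‖ * ‖u‖ ^ 2 := by ring
  · rw [hSsa.adjoint_eq]
    refine le_sqrt_mul_of_sq_le_mul_sq (inv_nonneg.2 hc.le) (norm_nonneg _) ?_
    rw [inv_mul_eq_div, le_div_iff₀' hc, hnorm x]
    exact hM _

/-- range identity of the factorization method: if M is self-adjoint
with M ≥ c > 0, then ran((T M T*)^{1/2}) = ran(T). -/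
theorem stmt12 {H1 H2 : Type*}
    [NormedAddCommGroup H1] [InnerProductSpace ℂ H1] [CompleteSpace H1]
    [NormedAddCommGroup H2] [InnerProductSpace ℂ H2] [CompleteSpace H2]
    (T : H1 →L[ℂ] H2) (M : H1 →L[ℂ] H1) (hMsa : IsSelfAdjoint M)
    (c : ℝ) (hc : 0 < c)
    (hM : ∀ φ : H1, c * ‖φ‖ ^ 2 ≤ (inner ℂ (M φ) φ : ℂ).re)
    (F : H2 →L[ℂ] H2) (hF : F = (T.comp M).comp (ContinuousLinearMap.adjoint T))
    -- S is the positive square root of the nonnegative operator F = T M T*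
    (S : H2 →L[ℂ] H2) (hS : S.IsPositive) (hS2 : S.comp S = F) :
    Set.range (⇑S) = Set.range (⇑T) :=
  stmt12_general T M c hc hM F hF S hS hS2
end
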